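/- For every 0 < ε < 1/4 and positive integer M, there exists δ₀ = δ₀(ε, M) > 0 such that for all 0 < δ < δ₀: if Γ is a D-regular graph on n vertices and at least εn vertices v satisfy ‖Q_v^τ − U‖ < δ, then at least (1 − (δ/ε)^{1/4^M})·n vertices v satisfy ‖Q_v^{(M+1)τ} − U‖ < 2e^{−εM/2} + 6δ. In particular one may take δ₀ = (ε/10^8)·3^{−M·4^M}. -/

import Mathlib

open Finset
open scoped Classical

/-- The transition matrix of the nearest-neighbor random walk on `G`. -/
noncomputable def rwStep {V : Type*} [Fintype V] (G : SimpleGraph V) : Matrix V V ℝ :=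
  fun u w => if G.Adj u w then (1 : ℝ) / (G.degree u) else 0

/-- The distribution of the nearest-neighbor random walk on `G` after `t` steps
started at `v`:  `rwDist G v t u = Pr[Q_v^t = u]`. -/
noncomputable def rwDist {V : Type*} [Fintype V] (G : SimpleGraph V) (v : V) (t : ℕ) :
    V → ℝ := fun u => (rwStep G ^ t) v u

/-- Total variation distance between two (densities of) distributions on a finite set. -/
noncomputable def tvDist {V : Type*} [Fintype V] (p q : V → ℝ) : ℝ :=
  (∑ u, |p u - q u|) / 2

/-- The uniform distribution on a finite set. -/
noncomputable def unif (V : Type*) [Fintype V] : V → ℝ :=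
  fun _ => 1 / (Fintype.card V)

section auxiliary
variable {V : Type*} [Fintype V]

lemma rowsum_pow (P : Matrix V V ℝ) (h1 : ∀ v, ∑ w, P v w = 1) (t : ℕ) (v : V) :
    ∑ w, (P ^ t) v w = 1 := by
  induction t generalizing v with
  | zero =>
    simp [Matrix.one_apply]
  | succ t ih =>
    rw [pow_succ]
    simp only [Matrix.mul_apply]
    calc ∑ w, ∑ u, (P ^ t) v u * P u w = ∑ u, (P ^ t) v u * ∑ w, P u w := by
          rw [Finset.sum_comm]; simp [Finset.mul_sum]
      _ = 1 := by simp [h1, ih]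

lemma nonneg_pow (P : Matrix V V ℝ) (h0 : ∀ v w, 0 ≤ P v w) (t : ℕ) (v w : V) :
    0 ≤ (P ^ t) v w := by
  induction t generalizing v w with
  | zero => simp [Matrix.one_apply]; positivity
  | succ t ih =>
    rw [pow_succ, Matrix.mul_apply]
    exact Finset.sum_nonneg fun u _ => mul_nonneg (ih v u) (h0 u w)

lemma colsum_pow (P : Matrix V V ℝ) (hs : P.IsSymm) (h1 : ∀ v, ∑ w, P v w = 1) (t : ℕ) (w : V) :
    ∑ v, (P ^ t) v w = 1 := by
  have hsp := hs.pow t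
  calc ∑ v, (P ^ t) v w = ∑ v, (P ^ t) w v := by
        refine Finset.sum_congr rfl fun v _ => ?_
        conv_lhs => rw [← hsp]
        rfl
    _ = 1 := rowsum_pow P h1 t w

lemma l1_contraction (K : Matrix V V ℝ) (h0 : ∀ v w, 0 ≤ K v w) (h1 : ∀ v, ∑ w, K v w = 1)
    (f : V → ℝ) : ∑ u, |∑ w, f w * K w u| ≤ ∑ w, |f w| := by
  calc ∑ u, |∑ w, f w * K w u| ≤ ∑ u, ∑ w, |f w| * K w u := by
        refine Finset.sum_le_sum fun u _ => ?_
        refine (Finset.abs_sum_le_sum_abs _ _).trans ?_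
        refine Finset.sum_le_sum fun w _ => ?_
        rw [abs_mul, abs_of_nonneg (h0 w u)]
    _ = ∑ w, |f w| * ∑ u, K w u := by rw [Finset.sum_comm]; simp [Finset.mul_sum]
    _ = ∑ w, |f w| := by simp [h1]


variable {V : Type*} [Fintype V]

lemma unif_sum (hV : 0 < Fintype.card V) : ∑ u : V, unif V u = 1 := by
  unfold unif
  rw [Finset.sum_const, nsmul_eq_mul, Finset.card_univ]
  field_simp

lemma tv_le_one (hV : 0 < Fintype.card V) (p : V → ℝ) (h0 : ∀ u, 0 ≤ p u)
    (h1 : ∑ u, p u = 1) : tvDist p (unif V) ≤ 1 := by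
  unfold tvDist
  rw [div_le_one (by norm_num)]
  calc ∑ u, |p u - unif V u| ≤ ∑ u, (p u + unif V u) := by
        refine Finset.sum_le_sum fun u _ => ?_
        refine (abs_sub _ _).trans ?_
        rw [abs_of_nonneg (h0 u), abs_of_nonneg (by unfold unif; positivity)]
    _ = 2 := by rw [Finset.sum_add_distrib, h1, unif_sum hV]; norm_num

lemma tv_nonneg (p q : V → ℝ) : 0 ≤ tvDist p q := by
  unfold tvDist; positivity

lemma two_tv (p q : V → ℝ) : ∑ u, |p u - q u| = 2 * tvDist p q := by
  unfold tvDist; ring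


variable {V : Type*} [Fintype V]

lemma rwStep_nonneg (G : SimpleGraph V) (v w : V) : 0 ≤ rwStep G v w := by
  unfold rwStep; split <;> positivity

lemma rwStep_symm (G : SimpleGraph V) {D : ℕ} (hreg : G.IsRegularOfDegree D) :
    (rwStep G).IsSymm := by
  ext v w
  unfold rwStep
  show (if G.Adj w v then (1:ℝ) / (G.degree w) else 0) = (if G.Adj v w then (1:ℝ) / (G.degree v) else 0)
  by_cases h : G.Adj v w
  · rw [if_pos h, if_pos h.symm, hreg v, hreg w]
  · rw [if_neg h, if_neg fun h' => h h'.symm]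

lemma rwStep_rowsum (G : SimpleGraph V) {D : ℕ} (hreg : G.IsRegularOfDegree D) (hD : 0 < D)
    (v : V) : ∑ w, rwStep G v w = 1 := by
  unfold rwStep
  rw [Finset.sum_ite, Finset.sum_const_zero, add_zero, Finset.sum_const, nsmul_eq_mul]
  have : (Finset.univ.filter fun w => G.Adj v w) = G.neighborFinset v := by
    ext w; simp [SimpleGraph.mem_neighborFinset]
  rw [this]
  rw [show (G.neighborFinset v).card = D from hreg v, hreg v]
  field_simp


variable {V : Type*} [Fintype V]

lemma rw_decomp (G : SimpleGraph V) (v : V) (t s : ℕ)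
    (h1 : ∀ x, ∑ w, rwStep G x w = 1) (hs : (rwStep G).IsSymm) (u : V) :
    rwDist G v (t + s) u - unif V u
      = ∑ w, (rwDist G v t w - unif V w) * ((rwStep G ^ s) w u) := by
  have key : rwDist G v (t + s) u = ∑ w, rwDist G v t w * (rwStep G ^ s) w u := by
    unfold rwDist
    rw [pow_add, Matrix.mul_apply]
  have key2 : unif V u = ∑ w, unif V w * (rwStep G ^ s) w u := by
    unfold unif
    rw [← Finset.mul_sum, colsum_pow _ hs h1, mul_one]
  rw [key, key2 ]
  rw [← Finset.sum_sub_distrib]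
  exact Finset.sum_congr rfl fun w _ => (sub_mul _ _ _).symm

lemma tv_mono (G : SimpleGraph V) (v : V) (t s : ℕ)
    (h0 : ∀ x w, 0 ≤ rwStep G x w) (h1 : ∀ x, ∑ w, rwStep G x w = 1)
    (hs : (rwStep G).IsSymm) :
    tvDist (rwDist G v (t + s)) (unif V) ≤ tvDist (rwDist G v t) (unif V) := by
  unfold tvDist
  refine div_le_div_of_nonneg_right ?_ (by norm_num)
  calc ∑ u, |rwDist G v (t + s) u - unif V u|
      = ∑ u, |∑ w, (rwDist G v t w - unif V w) * ((rwStep G ^ s) w u)| := by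
        exact Finset.sum_congr rfl fun u _ => by rw [rw_decomp G v t s h1 hs u]
    _ ≤ ∑ w, |rwDist G v t w - unif V w| :=
        l1_contraction _ (nonneg_pow _ h0 s) (rowsum_pow _ h1 s) _

end auxiliary

/-- `avoidP K S j v` : probability that the `K`-chain started at `v` avoids `S`
at each of the first `j` steps. -/
noncomputable def avoidP {V : Type*} [Fintype V] (K : Matrix V V ℝ) (S : Finset V) :
    ℕ → V → ℝ
  | 0, _ => 1
  | (j+1), v => ∑ w ∈ Sᶜ, K v w * avoidP K S j w

noncomputable def seqC (x : ℝ) : ℕ → ℝ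
  | 0 => 0
  | (j+1) => 4 * x + Real.sqrt (seqC x j)

noncomputable def seqA (e x : ℝ) : ℕ → ℝ
  | 0 => 1
  | (j+1) => (1 - e / 2) * seqA e x j + Real.sqrt (seqC x j)

noncomputable def badSet {V : Type*} [Fintype V] (K : Matrix V V ℝ) (W : Finset V) (x : ℝ) :
    ℕ → Finset V
  | 0 => ∅
  | (j+1) => Wᶜ ∪ Finset.univ.filter
      (fun v => Real.sqrt (seqC x j) < ∑ w ∈ badSet K W x j, K v w)


section auxiliary2
variable {V : Type*} [Fintype V]

lemma avoid_nonneg (K : Matrix V V ℝ) (S : Finset V) (h0 : ∀ v w, 0 ≤ K v w) :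
    ∀ j v, 0 ≤ avoidP K S j v
  | 0, v => by simp [avoidP]
  | (j+1), v => by
    rw [avoidP]
    exact Finset.sum_nonneg fun w _ => mul_nonneg (h0 v w) (avoid_nonneg K S h0 j w)

lemma avoid_le_one (K : Matrix V V ℝ) (S : Finset V) (h0 : ∀ v w, 0 ≤ K v w)
    (h1 : ∀ v, ∑ w, K v w = 1) : ∀ j v, avoidP K S j v ≤ 1
  | 0, v => le_refl 1
  | (j+1), v => by
    rw [avoidP]
    calc ∑ w ∈ Sᶜ, K v w * avoidP K S j w ≤ ∑ w ∈ Sᶜ, K v w := by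
          refine Finset.sum_le_sum fun w _ => ?_
          exact mul_le_of_le_one_right (h0 v w) (avoid_le_one K S h0 h1 j w)
      _ ≤ ∑ w, K v w := Finset.sum_le_sum_of_subset_of_nonneg (Finset.subset_univ _)
          (fun w _ _ => h0 v w)
      _ = 1 := h1 v

lemma seqC_nonneg (x : ℝ) (hx : 0 ≤ x) : ∀ j, 0 ≤ seqC x j
  | 0 => le_refl 0
  | (j+1) => by rw [seqC]; positivity

lemma seqA_nonneg (e x : ℝ) (he : e ≤ 2) : ∀ j, 0 ≤ seqA e x j
  | 0 => by norm_num [seqA]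
  | (j+1) => by
    rw [seqA]
    have h1 : 0 ≤ 1 - e / 2 := by linarith
    have := seqA_nonneg e x he j
    positivity


variable {V : Type*} [Fintype V]

lemma tv_le_avoid (G : SimpleGraph V) (τ : ℕ) (S : Finset V) (δ : ℝ)
    (h0 : ∀ x w, 0 ≤ rwStep G x w) (h1 : ∀ x, ∑ w, rwStep G x w = 1)
    (hs : (rwStep G).IsSymm)
    (hS : ∀ w ∈ S, tvDist (rwDist G w τ) (unif V) < δ)
    (hδ : 0 ≤ δ) (hV : 0 < Fintype.card V) :
    ∀ j v, tvDist (rwDist G v ((j + 1) * τ)) (unif V)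
      ≤ avoidP (rwStep G ^ τ) S j v + δ := by
  intro j
  induction j with
  | zero =>
    intro v
    rw [show avoidP (rwStep G ^ τ) S 0 v = 1 from rfl, show (0 + 1) * τ = τ by ring]
    have := tv_le_one hV (rwDist G v τ) (fun u => nonneg_pow _ h0 τ v u)
      (rowsum_pow _ h1 τ v)
    linarith
  | succ j ih =>
    intro v
    have hK0 : ∀ x w, 0 ≤ (rwStep G ^ τ) x w := nonneg_pow _ h0 τ
    have hK1 : ∀ x, ∑ w, (rwStep G ^ τ) x w = 1 := rowsum_pow _ h1 τ
    set K : Matrix V V ℝ := rwStep G ^ τ with hKdef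
    -- decomposition at time τ
    have key : ∀ u, rwDist G v ((j + 2) * τ) u - unif V u
        = ∑ w, K v w * (rwDist G w ((j + 1) * τ) u - unif V u) := by
      intro u
      have e1 : rwDist G v ((j + 2) * τ) u = ∑ w, K v w * rwDist G w ((j + 1) * τ) u := by
        unfold rwDist
        rw [show (j + 2) * τ = τ + (j + 1) * τ by ring, pow_add, Matrix.mul_apply]
      have e2 : unif V u = ∑ w, K v w * unif V u := by
        rw [← Finset.sum_mul, hK1 v, one_mul]
      rw [e1]
      conv_lhs => rw [e2]
      rw [← Finset.sum_sub_distrib]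
      exact Finset.sum_congr rfl fun w _ => (mul_sub _ _ _).symm
    have step1 : tvDist (rwDist G v ((j + 1 + 1) * τ)) (unif V)
        ≤ ∑ w, K v w * tvDist (rwDist G w ((j + 1) * τ)) (unif V) := by
      unfold tvDist
      calc (∑ u, |rwDist G v ((j + 1 + 1) * τ) u - unif V u|) / 2
          ≤ (∑ u, ∑ w, K v w * |rwDist G w ((j + 1) * τ) u - unif V u|) / 2 := by
            refine div_le_div_of_nonneg_right ?_ (by norm_num)
            refine Finset.sum_le_sum fun u _ => ?_
            rw [key u]
            refine (Finset.abs_sum_le_sum_abs _ _).trans ?_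
            refine Finset.sum_le_sum fun w _ => ?_
            rw [abs_mul, abs_of_nonneg (hK0 v w)]
        _ = ∑ w, K v w * ((∑ u, |rwDist G w ((j + 1) * τ) u - unif V u|) / 2) := by
            rw [Finset.sum_comm, Finset.sum_div]
            exact Finset.sum_congr rfl fun w _ => by
              rw [← Finset.mul_sum, mul_div_assoc]
    -- bound each term
    have hterm : ∀ w, K v w * tvDist (rwDist G w ((j + 1) * τ)) (unif V)
        ≤ K v w * (if w ∈ S then δ else avoidP K S j w + δ) := by
      intro w
      refine mul_le_mul_of_nonneg_left ?_ (hK0 v w)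
      by_cases hw : w ∈ S
      · rw [if_pos hw]
        have hmono := tv_mono G w τ (j * τ) h0 h1 hs
        have : τ + j * τ = (j + 1) * τ := by ring
        rw [this] at hmono
        exact hmono.trans (hS w hw).le
      · rw [if_neg hw]
        exact ih w
    have step2 : ∑ w, K v w * tvDist (rwDist G w ((j + 1) * τ)) (unif V)
        ≤ avoidP K S (j + 1) v + δ := by
      calc ∑ w, K v w * tvDist (rwDist G w ((j + 1) * τ)) (unif V)
          ≤ ∑ w, K v w * (if w ∈ S then δ else avoidP K S j w + δ) :=
            Finset.sum_le_sum fun w _ => hterm w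
        _ = ∑ w ∈ S, K v w * δ + ∑ w ∈ Sᶜ, K v w * (avoidP K S j w + δ) := by
            rw [← Finset.sum_add_sum_compl S]
            congr 1
            · exact Finset.sum_congr rfl fun w hw => by rw [if_pos hw]
            · exact Finset.sum_congr rfl fun w hw => by
                rw [if_neg (Finset.mem_compl.mp hw)]
        _ = ∑ w ∈ Sᶜ, K v w * avoidP K S j w + (∑ w ∈ S, K v w + ∑ w ∈ Sᶜ, K v w) * δ := by
            simp only [mul_add, Finset.sum_add_distrib, add_mul, Finset.sum_mul]
            ring
        _ = avoidP K S (j + 1) v + δ := by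
            rw [Finset.sum_add_sum_compl S, hK1 v, one_mul]
            rfl
    exact step1.trans step2


variable {V : Type*} [Fintype V]

lemma avoid_le_seqA (K : Matrix V V ℝ) (S W : Finset V) (x e : ℝ)
    (h0 : ∀ v w, 0 ≤ K v w) (h1 : ∀ v, ∑ w, K v w = 1)
    (hx : 0 ≤ x) (he : 0 ≤ e) (he2 : e ≤ 2)
    (hW : ∀ v ∈ W, ∑ w ∈ Sᶜ, K v w ≤ 1 - e / 2) :
    ∀ j v, v ∉ badSet K W x j → avoidP K S j v ≤ seqA e x j := by
  intro j
  induction j with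
  | zero => intro v _; exact le_refl 1
  | succ j ih =>
    intro v hv
    rw [badSet] at hv
    simp only [Finset.mem_union, Finset.mem_filter, Finset.mem_compl, Finset.mem_univ,
      true_and, not_or, not_lt] at hv
    obtain ⟨hvW, hvB⟩ := hv
    rw [not_not] at hvW
    have hvW' : v ∈ W := hvW
    rw [avoidP, seqA]
    have hsplit : ∑ w ∈ Sᶜ, K v w * avoidP K S j w
        = ∑ w ∈ Sᶜ.filter (fun w => w ∈ badSet K W x j), K v w * avoidP K S j w
          + ∑ w ∈ Sᶜ.filter (fun w => w ∉ badSet K W x j), K v w * avoidP K S j w :=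
      (Finset.sum_filter_add_sum_filter_not _ _ _).symm
    rw [hsplit]
    have part1 : ∑ w ∈ Sᶜ.filter (fun w => w ∈ badSet K W x j), K v w * avoidP K S j w
        ≤ Real.sqrt (seqC x j) := by
      calc ∑ w ∈ Sᶜ.filter (fun w => w ∈ badSet K W x j), K v w * avoidP K S j w
          ≤ ∑ w ∈ Sᶜ.filter (fun w => w ∈ badSet K W x j), K v w :=
            Finset.sum_le_sum fun w _ =>
              mul_le_of_le_one_right (h0 v w) (avoid_le_one K S h0 h1 j w)
        _ ≤ ∑ w ∈ badSet K W x j, K v w := by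
            refine Finset.sum_le_sum_of_subset_of_nonneg ?_ (fun w _ _ => h0 v w)
            intro w hw
            exact (Finset.mem_filter.mp hw).2
        _ ≤ Real.sqrt (seqC x j) := hvB
    have part2 : ∑ w ∈ Sᶜ.filter (fun w => w ∉ badSet K W x j), K v w * avoidP K S j w
        ≤ (1 - e / 2) * seqA e x j := by
      calc ∑ w ∈ Sᶜ.filter (fun w => w ∉ badSet K W x j), K v w * avoidP K S j w
          ≤ ∑ w ∈ Sᶜ.filter (fun w => w ∉ badSet K W x j), K v w * seqA e x j := by
            refine Finset.sum_le_sum fun w hw => ?_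
            exact mul_le_mul_of_nonneg_left (ih w (Finset.mem_filter.mp hw).2) (h0 v w)
        _ = (∑ w ∈ Sᶜ.filter (fun w => w ∉ badSet K W x j), K v w) * seqA e x j := by
            rw [Finset.sum_mul]
        _ ≤ (∑ w ∈ Sᶜ, K v w) * seqA e x j := by
            refine mul_le_mul_of_nonneg_right ?_ (seqA_nonneg e x he2 j)
            exact Finset.sum_le_sum_of_subset_of_nonneg (Finset.filter_subset _ _)
              (fun w _ _ => h0 v w)
        _ ≤ (1 - e / 2) * seqA e x j :=
            mul_le_mul_of_nonneg_right (hW v hvW') (seqA_nonneg e x he2 j)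
    linarith

lemma seqC_ge (x : ℝ) (hx : 0 ≤ x) (j : ℕ) (hj : 1 ≤ j) : 4 * x ≤ seqC x j := by
  obtain ⟨k, rfl⟩ := Nat.exists_eq_add_of_le hj
  rw [show 1 + k = k + 1 by ring, seqC]
  have := Real.sqrt_nonneg (seqC x k)
  linarith

lemma badSet_card (K : Matrix V V ℝ) (W : Finset V) (x : ℝ) (hx : 0 < x)
    (h0 : ∀ v w, 0 ≤ K v w) (hc : ∀ w, ∑ v, K v w = 1)
    (hWc : ((Wᶜ).card : ℝ) ≤ 4 * x * Fintype.card V) :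
    ∀ j, ((badSet K W x j).card : ℝ) ≤ seqC x j * Fintype.card V := by
  intro j
  induction j with
  | zero => simp [badSet, seqC]
  | succ j ih =>
    rw [badSet, seqC]
    set B := badSet K W x j with hB
    set F := Finset.univ.filter (fun v => Real.sqrt (seqC x j) < ∑ w ∈ B, K v w) with hF
    have hmarkov : (F.card : ℝ) * Real.sqrt (seqC x j) ≤ (B.card : ℝ) := by
      calc (F.card : ℝ) * Real.sqrt (seqC x j) = ∑ _v ∈ F, Real.sqrt (seqC x j) := by
            rw [Finset.sum_const, nsmul_eq_mul]
        _ ≤ ∑ v ∈ F, ∑ w ∈ B, K v w := by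
            refine Finset.sum_le_sum fun v hv => ?_
            exact (Finset.mem_filter.mp hv).2.le
        _ ≤ ∑ v, ∑ w ∈ B, K v w := by
            refine Finset.sum_le_sum_of_subset_of_nonneg (Finset.subset_univ _) ?_
            intro v _ _
            exact Finset.sum_nonneg fun w _ => h0 v w
        _ = ∑ w ∈ B, ∑ v, K v w := Finset.sum_comm
        _ = (B.card : ℝ) := by
            rw [Finset.sum_congr rfl fun w _ => hc w, Finset.sum_const, nsmul_eq_mul, mul_one]
    have hFcard : (F.card : ℝ) ≤ Real.sqrt (seqC x j) * Fintype.card V := by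
      rcases Nat.eq_zero_or_pos j with hj0 | hj1
      · subst hj0
        have hB0 : B = (∅ : Finset V) := by rw [hB]; rfl
        have : F = ∅ := by
          rw [hF]
          ext v
          simp only [Finset.mem_filter, Finset.mem_univ, true_and, Finset.notMem_empty,
            iff_false, not_lt, hB0, Finset.sum_empty]
          exact Real.sqrt_nonneg _
        rw [this]
        simp
        positivity
      · have hcj : 0 < seqC x j := lt_of_lt_of_le (by linarith) (seqC_ge x hx.le j hj1)
        have hsq : 0 < Real.sqrt (seqC x j) := Real.sqrt_pos.mpr hcj
        have h2 : (F.card : ℝ) ≤ (B.card : ℝ) / Real.sqrt (seqC x j) := by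
          rw [le_div_iff₀ hsq]
          exact hmarkov
        refine h2.trans ?_
        calc (B.card : ℝ) / Real.sqrt (seqC x j)
            ≤ seqC x j * Fintype.card V / Real.sqrt (seqC x j) := by gcongr
          _ = (seqC x j / Real.sqrt (seqC x j)) * Fintype.card V := by ring
          _ = Real.sqrt (seqC x j) * Fintype.card V := by rw [Real.div_sqrt]
    calc (((Wᶜ ∪ F).card : ℕ) : ℝ) ≤ ((Wᶜ.card + F.card : ℕ) : ℝ) := by
          exact_mod_cast Finset.card_union_le _ _
      _ = (Wᶜ.card : ℝ) + (F.card : ℝ) := by push_cast; ring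
      _ ≤ 4 * x * Fintype.card V + Real.sqrt (seqC x j) * Fintype.card V := by linarith
      _ = (4 * x + Real.sqrt (seqC x j)) * Fintype.card V := by ring


variable {V : Type*} [Fintype V]

lemma Wcompl_card (K : Matrix V V ℝ) (S : Finset V) (e d : ℝ)
    (he : 0 < e) (hd : 0 < d)
    (hsym : ∀ v w, K v w = K w v)
    (hScard : e * Fintype.card V ≤ (S.card : ℝ))
    (hStv : ∀ w ∈ S, ∑ v, |K w v - 1 / Fintype.card V| ≤ 2 * d) :
    ((Finset.univ.filter fun v => e / 2 ≤ ∑ w ∈ S, K v w)ᶜ.card : ℝ)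
      ≤ 4 * (d / e) * Fintype.card V := by
  set n := Fintype.card V with hn
  set W := Finset.univ.filter fun v => e / 2 ≤ ∑ w ∈ S, K v w with hW
  set g : V → ℝ := fun v => ∑ w ∈ S, |K v w - 1 / n| with hg
  have hg0 : ∀ v, 0 ≤ g v := fun v => Finset.sum_nonneg fun w _ => abs_nonneg _
  have claim1 : ∀ v ∈ Wᶜ, e / 2 ≤ g v := by
    intro v hv
    rw [Finset.mem_compl, hW, Finset.mem_filter] at hv
    push_neg at hv
    have hv2 := hv (Finset.mem_univ v)
    have h1 : ∑ w ∈ S, (1 / (n : ℝ) - K v w) ≤ g v :=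
      Finset.sum_le_sum fun w _ => (neg_le_abs _).trans_eq' (by rw [neg_sub])
    have h2 : ∑ w ∈ S, (1 / (n : ℝ) - K v w) = (S.card : ℝ) / n - ∑ w ∈ S, K v w := by
      rw [Finset.sum_sub_distrib, Finset.sum_const, nsmul_eq_mul]
      ring
    have h3 : e ≤ (S.card : ℝ) / n := by
      have h : 0 < n := hn ▸ Fintype.card_pos_iff.mpr ⟨v⟩
      rw [le_div_iff₀ (by exact_mod_cast h)]
      exact hScard
    linarith
  have claim2 : ∑ v, g v ≤ 2 * d * n := by
    calc ∑ v, g v = ∑ w ∈ S, ∑ v, |K v w - 1 / (n : ℝ)| := by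
          rw [hg]
          exact Finset.sum_comm
      _ = ∑ w ∈ S, ∑ v, |K w v - 1 / (n : ℝ)| := by
          refine Finset.sum_congr rfl fun w _ => Finset.sum_congr rfl fun v _ => ?_
          rw [hsym v w]
      _ ≤ ∑ _w ∈ S, 2 * d := Finset.sum_le_sum fun w hw => hStv w hw
      _ = 2 * d * S.card := by rw [Finset.sum_const, nsmul_eq_mul]; ring
      _ ≤ 2 * d * n := by
          have : (S.card : ℝ) ≤ n := by exact_mod_cast hn ▸ Finset.card_le_univ S
          nlinarith
  have markov : (Wᶜ.card : ℝ) * (e / 2) ≤ ∑ v, g v := by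
    calc (Wᶜ.card : ℝ) * (e / 2) = ∑ _v ∈ Wᶜ, e / 2 := by
          rw [Finset.sum_const, nsmul_eq_mul]
      _ ≤ ∑ v ∈ Wᶜ, g v := Finset.sum_le_sum claim1
      _ ≤ ∑ v, g v := Finset.sum_le_sum_of_subset_of_nonneg (Finset.subset_univ _)
          fun v _ _ => hg0 v
  have hfin : (Wᶜ.card : ℝ) * (e / 2) ≤ 2 * d * n := markov.trans claim2
  have he2 : 0 < e / 2 := by linarith
  calc (Wᶜ.card : ℝ) ≤ 2 * d * n / (e / 2) := by rw [le_div_iff₀ he2]; exact hfin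
    _ = 4 * (d / e) * n := by field_simp; ring

end auxiliary2

section numeric

lemma three_pow_ge (M : ℕ) (hM : 1 ≤ M) : 3 * M ≤ 3 ^ M := by
  induction M with
  | zero => omega
  | succ m ih =>
    rcases Nat.eq_zero_or_pos m with rfl | hm
    · norm_num
    · have h1 := ih hm
      have h2 : 3 ≤ 2 * 3 ^ m := by
        have : 3 ^ 1 ≤ 3 ^ m := Nat.pow_le_pow_right (by norm_num) hm
        omega
      have : 3 ^ (m + 1) = 3 * 3 ^ m := by ring
      omega

lemma nat_ineq (M : ℕ) (hM : 1 ≤ M) : 3 * M * 3 ^ M ≤ 3 ^ (M * 2 ^ M) := by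
  have h1 : 2 * M ≤ M * 2 ^ M := by
    have : 2 ≤ 2 ^ M := by
      calc 2 = 2 ^ 1 := rfl
        _ ≤ 2 ^ M := Nat.pow_le_pow_right (by norm_num) hM
    calc 2 * M = M * 2 := by ring
      _ ≤ M * 2 ^ M := Nat.mul_le_mul_left M this
  calc 3 * M * 3 ^ M ≤ 3 ^ M * 3 ^ M := Nat.mul_le_mul_right _ (three_pow_ge M hM)
    _ = 3 ^ (2 * M) := by rw [← pow_add]; ring_nf
    _ ≤ 3 ^ (M * 2 ^ M) := Nat.pow_le_pow_right (by norm_num) h1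
end numeric

section numeric2

lemma x_le_one (M : ℕ) (x : ℝ) (hxs : x ≤ ((3:ℝ) ^ (2 * 4 ^ M))⁻¹) : x ≤ 1 := by
  refine hxs.trans ?_
  rw [inv_le_one_iff₀]
  right
  exact one_le_pow₀ (by norm_num)

-- `9 x^{(1/2)^{M-1}} <= x^{1/4^M}`
lemma numeric_key (M : ℕ) (hM : 1 ≤ M) (x : ℝ) (hx0 : 0 < x)
    (hxs : x ≤ ((3:ℝ) ^ (2 * 4 ^ M))⁻¹) :
    9 * x ^ ((1/2 : ℝ) ^ (M - 1)) ≤ x ^ ((1:ℝ) / (4:ℝ) ^ M) := by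
  have hx1 : x ≤ 1 := x_le_one M x hxs
  set p : ℝ := (1/2 : ℝ) ^ (M - 1) with hp
  set q : ℝ := (1:ℝ) / (4:ℝ) ^ M with hq
  have hq0 : 0 < q := by rw [hq]; positivity
  have hpq : 2 * q ≤ p := by
    rw [hp, hq]
    obtain ⟨k, rfl⟩ := Nat.exists_eq_add_of_le hM
    have hk : 1 + k - 1 = k := by omega
    rw [hk]
    have h2k : (1:ℝ) ≤ 2 ^ k := one_le_pow₀ (by norm_num)
    have h4k : (4:ℝ) ^ k = (2 ^ k) ^ 2 := by
      rw [← pow_mul, show k * 2 = 2 * k by ring, pow_mul]; norm_num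
    have hpos2 : (0:ℝ) < 2 ^ k := by positivity
    have e1 : ((1:ℝ)/2) ^ k = 1 / 2 ^ k := by rw [div_pow, one_pow]
    have e2 : (4:ℝ) ^ (1 + k) = 4 * 4 ^ k := by rw [pow_add]; ring
    rw [e1, e2, h4k]
    rw [mul_one_div, div_le_div_iff₀ (by positivity) (by positivity)]
    nlinarith [h2k, hpos2]
  have e1 : x ^ p = x ^ q * x ^ (p - q) := by
    rw [← Real.rpow_add hx0]; ring_nf
  have e2 : x ^ (p - q) ≤ x ^ q := Real.rpow_le_rpow_of_exponent_ge hx0 hx1 (by linarith)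
  have e3 : x ^ q ≤ (((3:ℝ) ^ (2 * 4 ^ M))⁻¹) ^ q := Real.rpow_le_rpow hx0.le hxs hq0.le
  have e4 : (((3:ℝ) ^ (2 * 4 ^ M))⁻¹) ^ q = 1/9 := by
    rw [← Real.rpow_natCast (3:ℝ) (2 * 4 ^ M), ← Real.rpow_neg (by norm_num : (0:ℝ) ≤ 3),
      ← Real.rpow_mul (by norm_num : (0:ℝ) ≤ 3)]
    have harg : -((2 * 4 ^ M : ℕ) : ℝ) * q = -2 := by
      rw [hq]
      push_cast
      have h4 : ((4:ℝ) ^ M) ≠ 0 := by positivity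
      field_simp
    rw [harg, show (-2:ℝ) = ((-2:ℤ):ℝ) by norm_num, Real.rpow_intCast]
    norm_num
  have hxq0 : 0 ≤ x ^ q := Real.rpow_nonneg hx0.le q
  have hxpq0 : 0 ≤ x ^ (p - q) := Real.rpow_nonneg hx0.le (p - q)
  nlinarith [e1, e2, e3, e4, hxq0, hxpq0]

end numeric2

section numeric3

lemma sqrt_nine_mul (y : ℝ) (hy : 0 ≤ y) : Real.sqrt (9 * y) = 3 * Real.sqrt y := by
  rw [Real.sqrt_mul (by norm_num) y, show (9:ℝ) = 3 ^ 2 by norm_num, Real.sqrt_sq (by norm_num)]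

lemma sqrt_rpow' (x : ℝ) (hx : 0 ≤ x) (a : ℝ) :
    Real.sqrt (x ^ a) = x ^ (a * (1/2 : ℝ)) := by
  rw [Real.sqrt_eq_rpow, ← Real.rpow_mul hx]

lemma seqC_le (x : ℝ) (hx0 : 0 < x) (hx1 : x ≤ 1) :
    ∀ j, 1 ≤ j → seqC x j ≤ 9 * x ^ ((1/2 : ℝ) ^ (j - 1)) := by
  intro j hj
  induction j, hj using Nat.le_induction with
  | base =>
    show seqC x 1 ≤ _
    rw [show seqC x 1 = 4 * x + Real.sqrt (seqC x 0) from rfl,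
      show seqC x 0 = 0 from rfl, Real.sqrt_zero, add_zero]
    simp only [Nat.sub_self, pow_zero, Real.rpow_one]
    linarith
  | succ j hj ih =>
    rw [show seqC x (j + 1) = 4 * x + Real.sqrt (seqC x j) from rfl]
    have h1 : Real.sqrt (seqC x j) ≤ Real.sqrt (9 * x ^ ((1/2 : ℝ) ^ (j - 1))) :=
      Real.sqrt_le_sqrt ih
    have h2 : Real.sqrt (9 * x ^ ((1/2 : ℝ) ^ (j - 1))) = 3 * x ^ ((1/2 : ℝ) ^ j) := by
      rw [sqrt_nine_mul _ (Real.rpow_nonneg hx0.le _), sqrt_rpow' x hx0.le]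
      congr 1
      have hj1 : j - 1 + 1 = j := by omega
      rw [← pow_succ, hj1]
    have h3 : x ≤ x ^ ((1/2 : ℝ) ^ j) := by
      nth_rewrite 1 [← Real.rpow_one x]
      refine Real.rpow_le_rpow_of_exponent_ge hx0 hx1 ?_
      refine pow_le_one₀ (by norm_num) (by norm_num)
    have h4 : (j + 1) - 1 = j := by omega
    rw [h4]
    have h5 : 0 ≤ x ^ ((1/2:ℝ) ^ j) := Real.rpow_nonneg hx0.le _
    linarith

lemma seqC_le_CM (M : ℕ) (hM : 1 ≤ M) (x : ℝ) (hx0 : 0 < x)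
    (hxs : x ≤ ((3:ℝ) ^ (2 * 4 ^ M))⁻¹) :
    ∀ j ≤ M, seqC x j ≤ x ^ ((1:ℝ) / (4:ℝ) ^ M) := by
  have hx1 : x ≤ 1 := by
    refine hxs.trans ?_
    rw [inv_le_one_iff₀]; right; exact one_le_pow₀ (by norm_num)
  intro j hj
  rcases Nat.eq_zero_or_pos j with rfl | hj1
  · rw [show seqC x 0 = 0 from rfl]
    exact Real.rpow_nonneg hx0.le _
  calc seqC x j ≤ 9 * x ^ ((1/2 : ℝ) ^ (j - 1)) := seqC_le x hx0 hx1 j hj1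
    _ ≤ 9 * x ^ ((1/2 : ℝ) ^ (M - 1)) := by
        have : (1/2 : ℝ) ^ (M - 1) ≤ (1/2 : ℝ) ^ (j - 1) :=
          pow_le_pow_of_le_one (by norm_num) (by norm_num) (by omega)
        have := Real.rpow_le_rpow_of_exponent_ge hx0 hx1 this
        linarith
    _ ≤ x ^ ((1:ℝ) / (4:ℝ) ^ M) := numeric_key M hM x hx0 hxs

lemma seqC_le_one (M : ℕ) (hM : 1 ≤ M) (x : ℝ) (hx0 : 0 < x)
    (hxs : x ≤ ((3:ℝ) ^ (2 * 4 ^ M))⁻¹) :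
    ∀ j ≤ M, seqC x j ≤ 1 := by
  intro j hj
  refine (seqC_le_CM M hM x hx0 hxs j hj).trans ?_
  refine Real.rpow_le_one hx0.le ?_ (by positivity)
  refine hxs.trans ?_
  rw [inv_le_one_iff₀]; right; exact one_le_pow₀ (by norm_num)

lemma seqC_mono (M : ℕ) (hM : 1 ≤ M) (x : ℝ) (hx0 : 0 < x)
    (hxs : x ≤ ((3:ℝ) ^ (2 * 4 ^ M))⁻¹) :
    ∀ j ≤ M, seqC x j ≤ seqC x M := by
  have hstep : ∀ j, j ≤ M → seqC x j ≤ seqC x (j + 1) := by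
    intro j hj
    rw [show seqC x (j + 1) = 4 * x + Real.sqrt (seqC x j) from rfl]
    have h0 : 0 ≤ seqC x j := seqC_nonneg x hx0.le j
    have h1 : seqC x j ≤ 1 := seqC_le_one M hM x hx0 hxs j hj
    have h2 : seqC x j ≤ Real.sqrt (seqC x j) := by
      rw [Real.le_sqrt h0 h0]
      nlinarith
    linarith
  have key : ∀ k j, j + k ≤ M → seqC x j ≤ seqC x (j + k) := by
    intro k
    induction k with
    | zero => intro j _; simp
    | succ k ih =>
      intro j hjk
      have h1 : seqC x j ≤ seqC x (j + k) := ih j (by omega)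
      have h2 : seqC x (j + k) ≤ seqC x (j + k + 1) := hstep (j + k) (by omega)
      rw [show j + (k + 1) = j + k + 1 by ring]
      linarith
  intro j hj
  have := key (M - j) j (by omega)
  rwa [show j + (M - j) = M by omega] at this

lemma seqA_le (M : ℕ) (e x : ℝ) (he0 : 0 ≤ e) (he2 : e ≤ 2) (hx0 : 0 < x)
    (hmono : ∀ j ≤ M, seqC x j ≤ seqC x M) :
    ∀ j ≤ M, seqA e x j ≤ (1 - e / 2) ^ j + j * Real.sqrt (seqC x M) := by
  intro j
  induction j with
  | zero => intro _; simp [show seqA e x 0 = 1 from rfl]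
  | succ j ih =>
    intro hj
    have ih' := ih (by omega)
    rw [show seqA e x (j + 1) = (1 - e / 2) * seqA e x j + Real.sqrt (seqC x j) from rfl]
    have h1 : Real.sqrt (seqC x j) ≤ Real.sqrt (seqC x M) :=
      Real.sqrt_le_sqrt (hmono j (by omega))
    have h2 : 0 ≤ 1 - e / 2 := by linarith
    have h3 : 0 ≤ Real.sqrt (seqC x M) := Real.sqrt_nonneg _
    have h4 : (1 - e / 2) * seqA e x j ≤ (1 - e / 2) * ((1 - e / 2) ^ j + j * Real.sqrt (seqC x M)) :=
      mul_le_mul_of_nonneg_left ih' h2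
    have h5 : (1 - e / 2) * ((1 - e / 2) ^ j + j * Real.sqrt (seqC x M))
        ≤ (1 - e / 2) ^ (j + 1) + j * Real.sqrt (seqC x M) := by
      rw [pow_succ]
      have : (1 - e / 2) * (j * Real.sqrt (seqC x M)) ≤ j * Real.sqrt (seqC x M) := by
        have hj0 : (0:ℝ) ≤ j * Real.sqrt (seqC x M) := by positivity
        nlinarith
      nlinarith [this]
    push_cast
    push_cast at h5 ih' h4
    nlinarith [h1, h4, h5]

lemma pow_le_exp' (e : ℝ) (he0 : 0 ≤ e) (he2 : e ≤ 2) (M : ℕ) :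
    (1 - e / 2) ^ M ≤ Real.exp (-(e * M) / 2) := by
  have h1 : 1 - e / 2 ≤ Real.exp (-(e / 2)) := by
    have := Real.add_one_le_exp (-(e / 2))
    linarith
  have h2 : (1 - e / 2) ^ M ≤ Real.exp (-(e / 2)) ^ M :=
    pow_le_pow_left₀ (by linarith) h1 M
  refine h2.trans_eq ?_
  rw [← Real.exp_nat_mul]
  congr 1
  ring

end numeric3

lemma Mx_le_exp (M : ℕ) (hM : 1 ≤ M) (ε : ℝ) (hε0 : 0 < ε) (hε4 : ε < 1/4)
    (x : ℝ) (hx0 : 0 < x) (hxz : x ≤ (3:ℝ) ^ (-(M * 4 ^ M : ℤ))) :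
    (M : ℝ) * (3 * x ^ ((1/2 : ℝ) ^ M)) ≤ Real.exp (-(ε * M) / 2) := by
  set b : ℝ := (1/2 : ℝ) ^ M with hb
  have hb0 : 0 < b := by rw [hb]; positivity
  have key : ((3:ℝ) ^ (-(M * 4 ^ M : ℤ))) ^ b = ((3:ℝ) ^ (M * 2 ^ M : ℕ))⁻¹ := by
    have e1 : (3:ℝ) ^ (-(M * 4 ^ M : ℤ)) = (3:ℝ) ^ ((-(M * 4 ^ M : ℤ) : ℤ) : ℝ) :=
      (Real.rpow_intCast 3 _).symm
    rw [e1, ← Real.rpow_mul (by norm_num : (0:ℝ) ≤ 3)]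
    have h42 : (4:ℝ) ^ M * (1/2) ^ M = 2 ^ M := by rw [← mul_pow]; norm_num
    have e2 : ((-(M * 4 ^ M : ℤ) : ℤ) : ℝ) * b = -(((M * 2 ^ M : ℕ) : ℝ)) := by
      push_cast
      rw [hb]
      linear_combination (-(M:ℝ)) * h42
    rw [e2, Real.rpow_neg (by norm_num : (0:ℝ) ≤ 3), Real.rpow_natCast]
  have step1 : x ^ b ≤ ((3:ℝ) ^ (M * 2 ^ M : ℕ))⁻¹ := by
    have h1 : x ^ b ≤ ((3:ℝ) ^ (-(M * 4 ^ M : ℤ))) ^ b :=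
      Real.rpow_le_rpow hx0.le hxz hb0.le
    exact h1.trans_eq key
  have hexp1 : ((3:ℝ) ^ M)⁻¹ ≤ Real.exp (-(ε * M) / 2) := by
    have h1 : Real.exp (-(M:ℝ)/8) ≤ Real.exp (-(ε * M) / 2) := by
      refine Real.exp_le_exp.mpr ?_
      have hM0 : (0:ℝ) ≤ M := Nat.cast_nonneg M
      nlinarith
    refine le_trans ?_ h1
    have h2 : Real.exp (-(M:ℝ)/8) = Real.exp (-(1/8)) ^ M := by
      rw [← Real.exp_nat_mul]; congr 1; ring
    rw [h2]
    have h3 : Real.exp (1/8) ≤ 3 := by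
      have := Real.exp_le_exp.mpr (by norm_num : (1/8 : ℝ) ≤ 1)
      have h4 := Real.exp_one_lt_d9
      linarith
    have h5 : (3:ℝ)⁻¹ ≤ Real.exp (-(1/8)) := by
      rw [Real.exp_neg]
      exact inv_anti₀ (Real.exp_pos _) h3
    calc ((3:ℝ) ^ M)⁻¹ = ((3:ℝ)⁻¹) ^ M := by rw [inv_pow]
      _ ≤ Real.exp (-(1/8)) ^ M := pow_le_pow_left₀ (by norm_num) h5 M
  have mid : 3 * (M:ℝ) * ((3:ℝ) ^ (M * 2 ^ M : ℕ))⁻¹ ≤ ((3:ℝ) ^ M)⁻¹ := by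
    have hp1 : (0:ℝ) < 3 ^ (M * 2 ^ M : ℕ) := by positivity
    have hp2 : (0:ℝ) < 3 ^ M := by positivity
    rw [inv_eq_one_div, inv_eq_one_div, mul_one_div, div_le_div_iff₀ hp1 hp2]
    have := nat_ineq M hM
    calc 3 * (M:ℝ) * 3 ^ M ≤ ((3 ^ (M * 2 ^ M) : ℕ) : ℝ) := by exact_mod_cast this
      _ = 1 * 3 ^ (M * 2 ^ M : ℕ) := by push_cast; ring
  calc (M:ℝ) * (3 * x ^ b) = 3 * M * x ^ b := by ring
    _ ≤ 3 * M * ((3:ℝ) ^ (M * 2 ^ M : ℕ))⁻¹ := by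
        refine mul_le_mul_of_nonneg_left step1 ?_
        positivity
    _ ≤ ((3:ℝ) ^ M)⁻¹ := mid
    _ ≤ Real.exp (-(ε * M) / 2) := hexp1



/-- Main theorem: for `0 < ε < 1/4` and a positive integer `M`, with
`δ₀ = (ε/10^8)·3^{−M·4^M}`, for all `0 < δ < δ₀`: if at least `εn` vertices `v` of a
`D`-regular graph `Γ` on `n` vertices satisfy `‖Q_v^τ − U‖ < δ`, then at least
`(1 − (δ/ε)^{1/4^M})·n` vertices `v` satisfy `‖Q_v^{(M+1)τ} − U‖ < 2e^{−εM/2} + 6δ`. -/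
theorem many_mixing_from_positive_fraction {V : Type*} [Fintype V]
    (ε : ℝ) (hε : 0 < ε) (hε' : ε < 1 / 4) (M : ℕ) (hM : 0 < M)
    (δ : ℝ) (hδ : 0 < δ) (hδ' : δ < ε / 10 ^ 8 * (3 : ℝ) ^ (-(M * 4 ^ M : ℤ)))
    (Γ : SimpleGraph V) (D : ℕ) (hreg : Γ.IsRegularOfDegree D)
    (n : ℕ) (hn : n = Fintype.card V) (τ : ℕ) (hτ : 0 < τ)
    (hmix : ε * n ≤
      ((Finset.univ.filter fun v : V =>
          tvDist (rwDist Γ v τ) (unif V) < δ).card : ℝ)) :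
    (1 - (δ / ε) ^ ((1 : ℝ) / 4 ^ M)) * n ≤
      ((Finset.univ.filter fun v : V =>
          tvDist (rwDist Γ v ((M + 1) * τ)) (unif V)
            < 2 * Real.exp (-(ε * M) / 2) + 6 * δ).card : ℝ) := by
  classical
  subst hn
  set n := Fintype.card V with hn
  by_cases hn0 : n = 0
  · have hzero : (n:ℝ) = 0 := by exact_mod_cast hn0
    rw [hzero, mul_zero]
    positivity
  have hnpos : 0 < n := Nat.pos_of_ne_zero hn0
  have hnR : (0:ℝ) < n := by exact_mod_cast hnpos
  have h3z : (0:ℝ) < (3:ℝ) ^ (-(M * 4 ^ M : ℤ)) := by positivity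
  have h3z1 : (3:ℝ) ^ (-(M * 4 ^ M : ℤ)) ≤ 1 := by
    apply zpow_le_one_of_nonpos₀ (by norm_num : (1:ℝ) ≤ 3)
    have : (0:ℤ) ≤ (M * 4 ^ M : ℤ) := by positivity
    omega
  -- the degree must be positive
  have hD : 0 < D := by
    by_contra hD0
    push_neg at hD0
    have hDeq : D = 0 := by omega
    subst hDeq
    have hP0 : rwStep Γ = 0 := by
      funext u w
      show (if Γ.Adj u w then (1:ℝ) / (Γ.degree u) else 0) = 0
      rw [if_neg]
      intro hA
      have h1 : 0 < Γ.degree u := by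
        rw [← SimpleGraph.card_neighborFinset_eq_degree]
        exact Finset.card_pos.mpr ⟨w, (SimpleGraph.mem_neighborFinset Γ u w).mpr hA⟩
      rw [hreg u] at h1
      exact absurd h1 (by norm_num)
    have htvhalf : ∀ v : V, tvDist (rwDist Γ v τ) (unif V) = 1/2 := by
      intro v
      have hPt : rwStep Γ ^ τ = 0 := by rw [hP0]; exact zero_pow (by omega)
      show (∑ u, |rwDist Γ v τ u - unif V u|) / 2 = 1/2
      have : ∀ u : V, |rwDist Γ v τ u - unif V u| = 1 / (n:ℝ) := by
        intro u
        show |(rwStep Γ ^ τ) v u - 1/(n:ℝ)| = 1/(n:ℝ)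
        rw [hPt]
        rw [Matrix.zero_apply, zero_sub, abs_neg, abs_of_nonneg (by positivity)]
      rw [Finset.sum_congr rfl fun u _ => this u, Finset.sum_const, nsmul_eq_mul,
        Finset.card_univ]
      rw [← hn]
      field_simp
    have hδhalf : δ < 1/2 := by nlinarith [h3z, h3z1, hε, hε', hδ']
    have hempty : (Finset.univ.filter fun v : V =>
        tvDist (rwDist Γ v τ) (unif V) < δ) = ∅ := by
      refine Finset.filter_eq_empty_iff.mpr fun v _ => ?_
      rw [htvhalf v]
      linarith
    rw [hempty] at hmix
    simp only [Finset.card_empty, Nat.cast_zero] at hmix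
    nlinarith [hmix, hε, hnR]
  -- basic walk facts
  have hP0 : ∀ v w : V, 0 ≤ rwStep Γ v w := rwStep_nonneg Γ
  have hP1 : ∀ v : V, ∑ w, rwStep Γ v w = 1 := rwStep_rowsum Γ hreg hD
  have hPs : (rwStep Γ).IsSymm := rwStep_symm Γ hreg
  set K : Matrix V V ℝ := rwStep Γ ^ τ with hK
  have hK0 : ∀ v w, 0 ≤ K v w := nonneg_pow _ hP0 τ
  have hK1 : ∀ v, ∑ w, K v w = 1 := rowsum_pow _ hP1 τ
  have hKc : ∀ w, ∑ v, K v w = 1 := colsum_pow _ hPs hP1 τ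
  have hKsym : ∀ v w, K v w = K w v := by
    intro v w
    rw [hK]
    have hsp := hPs.pow τ
    conv_lhs => rw [← hsp]
    rfl
  set S : Finset V := Finset.univ.filter
    (fun v => tvDist (rwDist Γ v τ) (unif V) < δ) with hSdef
  have hScard : ε * n ≤ (S.card : ℝ) := hmix
  have hStv : ∀ w ∈ S, tvDist (rwDist Γ w τ) (unif V) < δ := by
    intro w hw
    exact (Finset.mem_filter.mp hw).2
  have hStv2 : ∀ w ∈ S, ∑ v, |K w v - 1 / (Fintype.card V : ℝ)| ≤ 2 * δ := by
    intro w hw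
    have e : ∑ v, |K w v - 1 / (Fintype.card V : ℝ)| = 2 * tvDist (rwDist Γ w τ) (unif V) :=
      two_tv (rwDist Γ w τ) (unif V)
    rw [e]
    have := hStv w hw
    linarith
  set x : ℝ := δ / ε with hxdef
  have hx0 : 0 < x := div_pos hδ hε
  have hxlt : x < (10 ^ 8 : ℝ)⁻¹ * (3:ℝ) ^ (-(M * 4 ^ M : ℤ)) := by
    rw [hxdef, div_lt_iff₀ hε]
    calc δ < ε / 10 ^ 8 * (3:ℝ) ^ (-(M * 4 ^ M : ℤ)) := hδ'
      _ = (10 ^ 8 : ℝ)⁻¹ * (3:ℝ) ^ (-(M * 4 ^ M : ℤ)) * ε := by ring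
  have hxz : x ≤ (3:ℝ) ^ (-(M * 4 ^ M : ℤ)) := by nlinarith [h3z]
  have hM1 : 1 ≤ M := hM
  have hxs : x ≤ ((3:ℝ) ^ (2 * 4 ^ M))⁻¹ := by
    have hz : (3:ℝ) ^ (-(M * 4 ^ M : ℤ)) = ((3:ℝ) ^ (M * 4 ^ M : ℕ))⁻¹ := by
      rw [zpow_neg]
      congr 1
    have hbig : (3:ℝ) ^ (2 * 4 ^ M) ≤ 10 ^ 8 * (3:ℝ) ^ (M * 4 ^ M : ℕ) := by
      rcases Nat.lt_or_ge M 2 with hM2 | hM2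
      · have hMeq : M = 1 := by omega
        subst hMeq
        norm_num
      · have hexp : 2 * 4 ^ M ≤ M * 4 ^ M := Nat.mul_le_mul_right _ hM2
        calc (3:ℝ) ^ (2 * 4 ^ M) ≤ (3:ℝ) ^ (M * 4 ^ M : ℕ) :=
              pow_le_pow_right₀ (by norm_num) hexp
          _ ≤ 10 ^ 8 * (3:ℝ) ^ (M * 4 ^ M : ℕ) := by nlinarith [pow_pos (show (0:ℝ) < 3 by norm_num) (M * 4 ^ M)]
    have hp1 : (0:ℝ) < (3:ℝ) ^ (2 * 4 ^ M) := by positivity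
    have hp2 : (0:ℝ) < 10 ^ 8 * (3:ℝ) ^ (M * 4 ^ M : ℕ) := by positivity
    have key : (10 ^ 8 : ℝ)⁻¹ * ((3:ℝ) ^ (M * 4 ^ M : ℕ))⁻¹ ≤ ((3:ℝ) ^ (2 * 4 ^ M))⁻¹ := by
      rw [← mul_inv]
      exact inv_anti₀ hp1 hbig
    rw [hz] at hxz hxlt
    calc x ≤ (10 ^ 8 : ℝ)⁻¹ * ((3:ℝ) ^ (M * 4 ^ M : ℕ))⁻¹ := hxlt.le
      _ ≤ ((3:ℝ) ^ (2 * 4 ^ M))⁻¹ := key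
  have hx1 : x ≤ 1 := x_le_one M x hxs
  -- the warm set W
  set W : Finset V := Finset.univ.filter (fun v => ε / 2 ≤ ∑ w ∈ S, K v w) with hWdef
  have hWc : ((Wᶜ).card : ℝ) ≤ 4 * x * n := by
    have := Wcompl_card K S ε δ hε hδ hKsym hScard hStv2
    rw [hxdef]
    calc ((Wᶜ).card : ℝ) ≤ 4 * (δ / ε) * Fintype.card V := this
      _ = 4 * (δ / ε) * n := by rw [← hn]
  have hW' : ∀ v ∈ W, ∑ w ∈ Sᶜ, K v w ≤ 1 - ε / 2 := by
    intro v hv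
    have h2 : ε / 2 ≤ ∑ w ∈ S, K v w := (Finset.mem_filter.mp hv).2
    have h3 : ∑ w ∈ S, K v w + ∑ w ∈ Sᶜ, K v w = 1 := by
      rw [Finset.sum_add_sum_compl]
      exact hK1 v
    linarith
  -- the main estimates
  have badcard : ∀ j, ((badSet K W x j).card : ℝ) ≤ seqC x j * n :=
    badSet_card K W x hx0 hK0 hKc hWc
  have hAv : ∀ j v, v ∉ badSet K W x j → avoidP K S j v ≤ seqA ε x j :=
    avoid_le_seqA K S W x ε hK0 hK1 hx0.le hε.le (by linarith) hW'
  have htv : ∀ j (v : V), tvDist (rwDist Γ v ((j + 1) * τ)) (unif V)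
      ≤ avoidP K S j v + δ :=
    tv_le_avoid Γ τ S δ hP0 hP1 hPs hStv hδ.le hnpos
  -- numeric estimates
  have hseqCM : seqC x M ≤ x ^ ((1:ℝ) / (4:ℝ) ^ M) := seqC_le_CM M hM1 x hx0 hxs M le_rfl
  have hmonoC : ∀ j ≤ M, seqC x j ≤ seqC x M := seqC_mono M hM1 x hx0 hxs
  have hA : seqA ε x M ≤ (1 - ε / 2) ^ M + M * Real.sqrt (seqC x M) :=
    seqA_le M ε x hε.le (by linarith) hx0 hmonoC M le_rfl
  have hexp1 : (1 - ε / 2) ^ M ≤ Real.exp (-(ε * M) / 2) :=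
    pow_le_exp' ε hε.le (by linarith) M
  have hsC : Real.sqrt (seqC x M) ≤ 3 * x ^ ((1/2 : ℝ) ^ M) := by
    have h1 : seqC x M ≤ 9 * x ^ ((1/2 : ℝ) ^ (M - 1)) := seqC_le x hx0 hx1 M hM1
    have h2 := Real.sqrt_le_sqrt h1
    have h3 : Real.sqrt (9 * x ^ ((1/2 : ℝ) ^ (M - 1))) = 3 * x ^ ((1/2 : ℝ) ^ M) := by
      rw [sqrt_nine_mul _ (Real.rpow_nonneg hx0.le _), sqrt_rpow' x hx0.le]
      congr 1
      have hj1 : M - 1 + 1 = M := by omega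
      rw [← pow_succ, hj1]
    rw [h3] at h2
    exact h2
  have hMx : (M : ℝ) * (3 * x ^ ((1/2 : ℝ) ^ M)) ≤ Real.exp (-(ε * M) / 2) :=
    Mx_le_exp M hM1 ε hε hε' x hx0 hxz
  have hMs : (M : ℝ) * Real.sqrt (seqC x M) ≤ Real.exp (-(ε * M) / 2) := by
    refine le_trans ?_ hMx
    exact mul_le_mul_of_nonneg_left hsC (Nat.cast_nonneg M)
  -- final counting
  set T : Finset V := Finset.univ.filter (fun v : V =>
    tvDist (rwDist Γ v ((M + 1) * τ)) (unif V)
      < 2 * Real.exp (-(ε * M) / 2) + 6 * δ) with hTdef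
  have hsub : ∀ v : V, v ∉ badSet K W x M → v ∈ T := by
    intro v hv
    refine Finset.mem_filter.mpr ⟨Finset.mem_univ v, ?_⟩
    have t1 := htv M v
    have t2 := hAv M v hv
    have t3 : tvDist (rwDist Γ v ((M + 1) * τ)) (unif V)
        ≤ (1 - ε / 2) ^ M + M * Real.sqrt (seqC x M) + δ := by linarith
    have t4 : (1 - ε / 2) ^ M + (M : ℝ) * Real.sqrt (seqC x M)
        ≤ 2 * Real.exp (-(ε * M) / 2) := by linarith
    linarith
  have hsubset : Finset.univ \ badSet K W x M ⊆ T := by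
    intro v hv
    exact hsub v (Finset.mem_sdiff.mp hv).2
  have hcard1 : (n : ℝ) - ((badSet K W x M).card : ℝ) ≤ (T.card : ℝ) := by
    have h1 : (Finset.univ \ badSet K W x M).card ≤ T.card :=
      Finset.card_le_card hsubset
    have h2 : (Finset.univ \ badSet K W x M).card
        = n - (badSet K W x M).card := by
      rw [Finset.card_sdiff_of_subset (Finset.subset_univ _), Finset.card_univ, ← hn]
    have h3 : (badSet K W x M).card ≤ n := by
      rw [hn]
      exact (Finset.card_le_univ _)
    have h4 : ((Finset.univ \ badSet K W x M).card : ℝ)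
        = (n : ℝ) - ((badSet K W x M).card : ℝ) := by
      rw [h2, Nat.cast_sub h3]
    rw [← h4]
    exact_mod_cast h1
  calc (1 - x ^ ((1:ℝ) / 4 ^ M)) * n ≤ (1 - seqC x M) * n := by
        refine mul_le_mul_of_nonneg_right ?_ hnR.le
        linarith [hseqCM]
    _ = (n : ℝ) - seqC x M * n := by ring
    _ ≤ (n : ℝ) - ((badSet K W x M).card : ℝ) := by linarith [badcard M]
    _ ≤ (T.card : ℝ) := hcard1
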